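/- For every n ≥ 1, every nonconstant function f : Ω_n → ℂ and every t > 0, the uniform probability measure of the set {x ∈ Ω_n : |f(x) − 𝔼f| > t} is at most 2 exp(−8t²/(π² ‖ |∇f| ‖_∞²)). -/

import Mathlib

open Real Finset

namespace DiscreteCube

variable {n : ℕ}

/-- The point of the cube `{-1,1}^n` encoded by `x : Fin n → Bool`:
coordinate `j` is `1` if `x j = true` and `-1` otherwise. -/
def sgn (b : Bool) : ℂ := if b then 1 else -1

/-- Negate the `j`-th coordinate. -/
def flip (j : Fin n) (x : Fin n → Bool) : Fin n → Bool :=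
  Function.update x j (!(x j))

/-- Discrete partial derivative `(∂_j f)(x) = f(x) - f(x e_j)`. -/
def pd (j : Fin n) (f : (Fin n → Bool) → ℂ) (x : Fin n → Bool) : ℂ :=
  f x - f (flip j x)

/-- Length of the discrete gradient, `|∇f|(x) = (Σ_j |(∂_j f)(x)|²)^{1/2}`. -/
noncomputable def gradLen (f : (Fin n → Bool) → ℂ) (x : Fin n → Bool) : ℝ :=
  Real.sqrt (∑ j : Fin n, ‖pd j f x‖ ^ 2)

/-- Expectation with respect to the uniform probability on the cube. -/
noncomputable def expect (f : (Fin n → Bool) → ℂ) : ℂ :=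
  (∑ x : Fin n → Bool, f x) / 2 ^ n

/-- `L^p` norm (`1 ≤ p < ∞`) of a complex-valued function on the cube. -/
noncomputable def cLp (p : ℝ) (f : (Fin n → Bool) → ℂ) : ℝ :=
  ((∑ x : Fin n → Bool, ‖f x‖ ^ p) / 2 ^ n) ^ (1 / p)

/-- `L^p` norm (`1 ≤ p < ∞`) of a real-valued function on the cube. -/
noncomputable def rLp (p : ℝ) (g : (Fin n → Bool) → ℝ) : ℝ :=
  ((∑ x : Fin n → Bool, |g x| ^ p) / 2 ^ n) ^ (1 / p)

end DiscreteCube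

namespace DiscreteCube

/-- `L^∞` norm of a real-valued function on the cube. -/
noncomputable def rLinf {n : ℕ} (g : (Fin n → Bool) → ℝ) : ℝ :=
  ⨆ x : Fin n → Bool, |g x|

end DiscreteCube

open DiscreteCube

/-!
Put `g = f - 𝔼 f`, `K = ‖|∇f|‖_∞` and `G = L⁻¹ g`, where `L = ½ ∑ⱼ ∂ⱼ` acts diagonally on Walsh
functions. Integration by parts, `4 𝔼[g h̄] = ∑ⱼ 𝔼[∂ⱼG · ∂ⱼh̄]`, applied to `h = g |g|^{2q}`
bounds `𝔼|g|^{2q+2}` by `(2q+1)/2 · K² · 𝔼|g|^{2q}`, provided `|∇G| ≤ K` pointwise. For the latter,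
`∂ⱼG = ∫₀¹ T_ρ^{(j)} ∂ⱼf dρ`, where `T_ρ^{(j)}` is the noise operator with correlation `ρ` in every
coordinate but `j`; Jensen's inequality for its positive kernel, together with the evenness of
`|∂ⱼf|²` in `xⱼ`, reduces `∑ⱼ |T_ρ^{(j)} ∂ⱼf|²` to `T_ρ |∇f|² ≤ K²`. The moment bounds sum to
`𝔼 cosh(s|g|) ≤ exp(s²K²/4)`, and Markov's inequality at `s = 2t/K²` gives the tail
`2 exp(-t²/K²)`, which is stronger than the claim as `π² ≥ 8`.
-/

open scoped BigOperators ComplexConjugate Nat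

namespace DiscreteCube

variable {n : ℕ}

lemma flip_apply_self (j : Fin n) (x : Fin n → Bool) : flip j x j = !x j :=
  Function.update_self j _ x

lemma flip_apply_of_ne {j k : Fin n} (h : k ≠ j) (x : Fin n → Bool) : flip j x k = x k :=
  Function.update_of_ne h _ x

lemma flip_involutive (j : Fin n) : Function.Involutive (flip j) := by
  intro x
  funext k
  rcases eq_or_ne k j with rfl | h
  · simp [flip_apply_self]
  · simp [flip_apply_of_ne h]

lemma expect_comp_flip {M : Type*} [AddCommMonoid M] [Module ℚ≥0 M] (j : Fin n)
    (F : (Fin n → Bool) → M) : 𝔼 x, F (flip j x) = 𝔼 x, F x :=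
  Fintype.expect_equiv ((flip_involutive j).toPerm _) _ _ fun _ => rfl

lemma expect_mul_add_comp_flip {a b : (Fin n → Bool) → ℝ} {j : Fin n}
    (ha : ∀ x, a (flip j x) = a x) :
    𝔼 x, a x * (b x + b (flip j x)) = 2 * 𝔼 x, a x * b x := by
  have hflip := expect_comp_flip j fun x => a x * b x
  simp only [ha] at hflip
  rw [two_mul]
  nth_rewrite 2 [← hflip]
  simp only [mul_add, Finset.expect_add_distrib]

lemma sum_prod_eq_prod_add {R : Type*} [CommSemiring R] (F : Fin n → Bool → R) :
    ∑ x : Fin n → Bool, ∏ k, F k (x k) = ∏ k, (F k true + F k false) := by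
  simp [← Fintype.prod_sum]

lemma card_cube : Fintype.card (Fin n → Bool) = 2 ^ n := by
  simp

lemma expect_eq_sum_div {K : Type*} [Semifield K] [CharZero K] (F : (Fin n → Bool) → K) :
    𝔼 x, F x = (∑ x, F x) / 2 ^ n := by
  rw [Fintype.expect_eq_sum_div_card, card_cube, Nat.cast_pow, Nat.cast_ofNat]

lemma expect_eq_finsetExpect (f : (Fin n → Bool) → ℂ) : expect f = 𝔼 x, f x :=
  (expect_eq_sum_div f).symm

lemma conj_expect (f : (Fin n → Bool) → ℂ) : conj (𝔼 x, f x) = 𝔼 x, conj (f x) := by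
  simp [expect_eq_sum_div, map_sum, map_ofNat]

lemma sgn_mul_self (b : Bool) : sgn b * sgn b = 1 := by
  cases b <;> norm_num [sgn]

lemma conj_sgn (b : Bool) : conj (sgn b) = sgn b := by
  cases b <;> simp [sgn]

def walsh (S : Finset (Fin n)) (x : Fin n → Bool) : ℂ :=
  ∏ j ∈ S, sgn (x j)

lemma walsh_eq_prod_ite (S : Finset (Fin n)) (x : Fin n → Bool) :
    walsh S x = ∏ k, if k ∈ S then sgn (x k) else 1 := by
  rw [Finset.prod_ite_mem, Finset.univ_inter, walsh]

@[simp] lemma walsh_empty (x : Fin n → Bool) : walsh ∅ x = 1 := by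
  simp [walsh]

@[simp] lemma conj_walsh (S : Finset (Fin n)) (x : Fin n → Bool) :
    conj (walsh S x) = walsh S x := by
  simp [walsh, map_prod, conj_sgn]

lemma walsh_flip (S : Finset (Fin n)) (j : Fin n) (x : Fin n → Bool) :
    walsh S (flip j x) = (if j ∈ S then -1 else 1) * walsh S x := by
  simp only [walsh_eq_prod_ite]
  rw [← Finset.mul_prod_erase _ _ (Finset.mem_univ j),
    ← Finset.mul_prod_erase _ _ (Finset.mem_univ j),
    Finset.prod_congr rfl fun k hk => by rw [flip_apply_of_ne (Finset.ne_of_mem_erase hk)],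
    flip_apply_self]
  split_ifs <;> cases x j <;> simp [sgn]

lemma walsh_mul_walsh (S T : Finset (Fin n)) (x : Fin n → Bool) :
    walsh S x * walsh T x = walsh (symmDiff S T) x := by
  simp only [walsh_eq_prod_ite, ← Finset.prod_mul_distrib, Finset.mem_symmDiff]
  refine Finset.prod_congr rfl fun k _ => ?_
  by_cases hS : k ∈ S <;> by_cases hT : k ∈ T <;> simp [hS, hT, sgn_mul_self]

lemma expect_walsh (S : Finset (Fin n)) : 𝔼 x, walsh S x = if S = ∅ then 1 else 0 := by
  have hsum : ∀ k, ((if k ∈ S then sgn true else 1) + if k ∈ S then sgn false else 1) =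
      if k ∈ S then 0 else 2 := fun k => by split_ifs <;> norm_num [sgn]
  simp only [expect_eq_sum_div, walsh_eq_prod_ite]
  rw [sum_prod_eq_prod_add fun k b => if k ∈ S then sgn b else 1,
    Finset.prod_congr rfl fun k _ => hsum k]
  split_ifs with hS
  · simp [hS]
  · obtain ⟨k, hk⟩ := Finset.nonempty_iff_ne_empty.mpr hS
    rw [Finset.prod_eq_zero (Finset.mem_univ k) (by simp [hk]), zero_div]

lemma expect_walsh_mul_walsh (S T : Finset (Fin n)) :
    𝔼 x, walsh S x * walsh T x = if S = T then 1 else 0 := by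
  simp only [walsh_mul_walsh, expect_walsh, Finset.symmDiff_eq_empty]

noncomputable def walshCoeff (f : (Fin n → Bool) → ℂ) (S : Finset (Fin n)) : ℂ :=
  𝔼 x, f x * walsh S x

lemma walshCoeff_sum_mul_walsh (a : Finset (Fin n) → ℂ) (S : Finset (Fin n)) :
    walshCoeff (fun x => ∑ T, a T * walsh T x) S = a S := by
  simp only [walshCoeff, Finset.sum_mul, Finset.expect_sum_comm, mul_assoc, ← Finset.mul_expect,
    expect_walsh_mul_walsh, mul_ite, mul_one, mul_zero, Finset.sum_ite_eq', Finset.mem_univ,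
    if_true]

lemma sum_walsh_mul_walsh (x y : Fin n → Bool) :
    ∑ S, walsh S y * walsh S x = if y = x then 2 ^ n else 0 := by
  have hprod : ∑ S, walsh S y * walsh S x = ∏ k, (sgn (y k) * sgn (x k) + 1) := by
    simp [Fintype.prod_add, walsh, Finset.prod_mul_distrib]
  rw [hprod]
  split_ifs with hxy
  · simp [hxy, sgn_mul_self, one_add_one_eq_two]
  · obtain ⟨k, hk⟩ := Function.ne_iff.mp hxy
    refine Finset.prod_eq_zero (Finset.mem_univ k) ?_
    revert hk
    cases y k <;> cases x k <;> norm_num [sgn]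

lemma sum_walshCoeff_mul_walsh (f : (Fin n → Bool) → ℂ) (x : Fin n → Bool) :
    ∑ S, walshCoeff f S * walsh S x = f x := by
  simp only [walshCoeff, Finset.expect_mul, mul_assoc, ← Finset.expect_sum_comm, ← Finset.mul_sum,
    sum_walsh_mul_walsh]
  rw [expect_eq_sum_div]
  simp

lemma expect_mul_conj (u v : (Fin n → Bool) → ℂ) :
    𝔼 x, u x * conj (v x) = ∑ S, walshCoeff u S * conj (walshCoeff v S) := by
  conv_lhs => enter [2, x]; rw [← sum_walshCoeff_mul_walsh u x]
  simp only [Finset.sum_mul, Finset.expect_sum_comm, mul_assoc, ← Finset.mul_expect, walshCoeff,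
    conj_expect, map_mul, conj_walsh, mul_comm (walsh _ _)]

lemma walshCoeff_pd (j : Fin n) (u : (Fin n → Bool) → ℂ) (S : Finset (Fin n)) :
    walshCoeff (pd j u) S = if j ∈ S then 2 * walshCoeff u S else 0 := by
  have hflip : 𝔼 x, u (flip j x) * walsh S x = (if j ∈ S then -1 else 1) * walshCoeff u S := by
    rw [← expect_comp_flip j, walshCoeff, Finset.mul_expect]
    simp only [flip_involutive j _, walsh_flip, mul_left_comm]
  simp only [walshCoeff, pd, sub_mul, Finset.expect_sub_distrib] at hflip ⊢
  rw [hflip]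
  split_ifs <;> ring

lemma walshCoeff_sub_expect (f : (Fin n → Bool) → ℂ) (S : Finset (Fin n)) :
    walshCoeff (fun x => f x - expect f) S = if S = ∅ then 0 else walshCoeff f S := by
  simp only [walshCoeff, sub_mul, Finset.expect_sub_distrib, ← Finset.mul_expect, expect_walsh]
  split_ifs with hS
  · subst hS
    simp [expect_eq_finsetExpect]
  · simp

-- The `S = ∅` term vanishes since `x / 0 = 0`, so this is `L⁻¹ (f - 𝔼 f)` for the Laplacian
-- `L = ½ ∑ⱼ ∂ⱼ`, which multiplies the `S`-th Walsh coefficient by `#S`.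
noncomputable def lapInv (f : (Fin n → Bool) → ℂ) (x : Fin n → Bool) : ℂ :=
  ∑ S, walshCoeff f S / S.card * walsh S x

lemma walshCoeff_lapInv (f : (Fin n → Bool) → ℂ) (S : Finset (Fin n)) :
    walshCoeff (lapInv f) S = walshCoeff f S / S.card :=
  walshCoeff_sum_mul_walsh _ S

lemma four_mul_expect_sub_mul_conj (f h : (Fin n → Bool) → ℂ) :
    4 * 𝔼 x, (f x - expect f) * conj (h x) = ∑ j, 𝔼 x, pd j (lapInv f) x * conj (pd j h x) := by
  simp only [expect_mul_conj, walshCoeff_pd, walshCoeff_lapInv, walshCoeff_sub_expect]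
  rw [Finset.sum_comm, Finset.mul_sum]
  refine Finset.sum_congr rfl fun S _ => ?_
  have hterm : ∀ j, (if j ∈ S then 2 * (walshCoeff f S / S.card) else 0) *
      conj (if j ∈ S then 2 * walshCoeff h S else 0) =
      if j ∈ S then 4 * (walshCoeff f S / S.card) * conj (walshCoeff h S) else 0 := fun j => by
    split_ifs
    · simp only [map_mul, map_ofNat]; ring
    · simp
  rw [Finset.sum_congr rfl fun j _ => hterm j, Finset.sum_ite_mem, Finset.univ_inter,
    Finset.sum_const, nsmul_eq_mul]
  rcases eq_or_ne S ∅ with rfl | hS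
  · simp
  · have hcard : (S.card : ℂ) ≠ 0 := by simpa using hS
    rw [if_neg hS]
    field_simp

-- In `±1` notation this is `∏ₖ (1 + r k * xₖ * yₖ)`.
def noiseKernel (r : Fin n → ℝ) (x y : Fin n → Bool) : ℝ :=
  ∏ k, if x k = y k then 1 + r k else 1 - r k

lemma noiseKernel_nonneg {r : Fin n → ℝ} (hr : ∀ k, |r k| ≤ 1) (x y : Fin n → Bool) :
    0 ≤ noiseKernel r x y :=
  Finset.prod_nonneg fun k _ => by split_ifs <;> linarith [abs_le.mp (hr k)]

lemma expect_noiseKernel (r : Fin n → ℝ) (x : Fin n → Bool) : 𝔼 y, noiseKernel r x y = 1 := by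
  have hsum : ∀ k, ((if x k = true then 1 + r k else 1 - r k) +
      if x k = false then 1 + r k else 1 - r k) = 2 := fun k => by cases x k <;> simp <;> ring
  simp only [expect_eq_sum_div, noiseKernel]
  rw [sum_prod_eq_prod_add fun k b => if x k = b then 1 + r k else 1 - r k,
    Finset.prod_congr rfl fun k _ => hsum k]
  simp

lemma expect_noiseKernel_mul_walsh (r : Fin n → ℝ) (S : Finset (Fin n)) (x : Fin n → Bool) :
    𝔼 y, (noiseKernel r x y : ℂ) * walsh S y = (∏ k ∈ S, (r k : ℂ)) * walsh S x := by
  have hsum : ∀ k, ((if x k = true then 1 + (r k : ℂ) else 1 - r k) *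
      (if k ∈ S then sgn true else 1) + (if x k = false then 1 + (r k : ℂ) else 1 - r k) *
      (if k ∈ S then sgn false else 1)) = 2 * if k ∈ S then r k * sgn (x k) else 1 :=
    fun k => by cases x k <;> by_cases hk : k ∈ S <;> simp [hk, sgn] <;> ring
  simp only [expect_eq_sum_div, noiseKernel, walsh_eq_prod_ite, Complex.ofReal_prod,
    apply_ite (fun t : ℝ => (t : ℂ)), Complex.ofReal_add, Complex.ofReal_sub, Complex.ofReal_one,
    ← Finset.prod_mul_distrib]
  rw [sum_prod_eq_prod_add fun k b => (if x k = b then 1 + (r k : ℂ) else 1 - r k) *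
      (if k ∈ S then sgn b else 1), Finset.prod_congr rfl fun k _ => hsum k,
    Finset.prod_mul_distrib, Finset.prod_ite_mem, Finset.univ_inter, Finset.prod_mul_distrib]
  simp

lemma noiseKernel_add_noiseKernel_flip {r r' : Fin n → ℝ} {j : Fin n} (hr : ∀ k ≠ j, r k = r' k)
    (x y : Fin n → Bool) :
    noiseKernel r x y + noiseKernel r x (flip j y) =
      noiseKernel r' x y + noiseKernel r' x (flip j y) := by
  have hpair : ∀ r : Fin n → ℝ, noiseKernel r x y + noiseKernel r x (flip j y) =
      2 * ∏ k ∈ Finset.univ.erase j, if x k = y k then 1 + r k else 1 - r k := by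
    intro r
    have hrest : (∏ k ∈ Finset.univ.erase j, if x k = flip j y k then 1 + r k else 1 - r k) =
        ∏ k ∈ Finset.univ.erase j, if x k = y k then 1 + r k else 1 - r k :=
      Finset.prod_congr rfl fun k hk => by rw [flip_apply_of_ne (Finset.ne_of_mem_erase hk)]
    simp only [noiseKernel]
    rw [← Finset.mul_prod_erase _ _ (Finset.mem_univ j),
      ← Finset.mul_prod_erase _ _ (Finset.mem_univ j), hrest, flip_apply_self]
    cases x j <;> cases y j <;> simp <;> ring
  rw [hpair, hpair]
  congr 1
  exact Finset.prod_congr rfl fun k hk => by rw [hr k (Finset.ne_of_mem_erase hk)]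

lemma expect_noiseKernel_mul_eq_of_comp_flip {r r' : Fin n → ℝ} {j : Fin n}
    (hr : ∀ k ≠ j, r k = r' k) {v : (Fin n → Bool) → ℝ} (hv : ∀ y, v (flip j y) = v y)
    (x : Fin n → Bool) :
    𝔼 y, noiseKernel r x y * v y = 𝔼 y, noiseKernel r' x y * v y := by
  have h := expect_mul_add_comp_flip (b := noiseKernel r x) hv
  have h' := expect_mul_add_comp_flip (b := noiseKernel r' x) hv
  simp only [noiseKernel_add_noiseKernel_flip hr] at h
  simp only [mul_comm (v _)] at h h'
  linarith

lemma norm_expect_noiseKernel_mul_sq_le {r : Fin n → ℝ} (hr : ∀ k, |r k| ≤ 1)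
    (u : (Fin n → Bool) → ℂ) (x : Fin n → Bool) :
    ‖𝔼 y, (noiseKernel r x y : ℂ) * u y‖ ^ 2 ≤ 𝔼 y, noiseKernel r x y * ‖u y‖ ^ 2 := by
  have hK := noiseKernel_nonneg hr x
  have htri : ‖𝔼 y, (noiseKernel r x y : ℂ) * u y‖ ≤ 𝔼 y, noiseKernel r x y * ‖u y‖ := by
    refine (RCLike.norm_expect_le (K := ℝ)).trans_eq ?_
    simp only [norm_mul, Complex.norm_real, Real.norm_of_nonneg (hK _)]
  have hCS := Finset.expect_mul_sq_le_sq_mul_sq Finset.univ (fun y => √(noiseKernel r x y))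
    fun y => √(noiseKernel r x y) * ‖u y‖
  simp only [← mul_assoc, ← sq, mul_pow, Real.sq_sqrt (hK _), expect_noiseKernel, one_mul] at hCS
  exact (pow_le_pow_left₀ (norm_nonneg _) htri 2).trans hCS

lemma sum_norm_intervalIntegral_sq_le {ι : Type*} [Fintype ι] {F : ι → ℝ → ℂ} {B : ℝ}
    (hF : ∀ i, Continuous (F i)) (hB : ∀ ρ ∈ Set.Icc (0 : ℝ) 1, ∑ i, ‖F i ρ‖ ^ 2 ≤ B) :
    ∑ i, ‖∫ ρ in (0 : ℝ)..1, F i ρ‖ ^ 2 ≤ B := by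
  set V : ℝ → EuclideanSpace ℂ ι := fun ρ => WithLp.toLp 2 fun i => F i ρ
  have hV : Continuous V := by fun_prop
  have hB0 : 0 ≤ B := (Finset.sum_nonneg fun i _ => sq_nonneg _).trans (hB 0 (by simp))
  have hcoord : ∀ i, ∫ ρ in (0 : ℝ)..1, F i ρ = (∫ ρ in (0 : ℝ)..1, V ρ) i := fun i =>
    (EuclideanSpace.proj i).intervalIntegral_comp_comm (hV.intervalIntegrable 0 1)
  have hnorm : ‖∫ ρ in (0 : ℝ)..1, V ρ‖ ≤ √B := by
    refine (intervalIntegral.norm_integral_le_of_norm_le_const (C := √B) fun ρ hρ => ?_).trans_eq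
      (by simp)
    rw [EuclideanSpace.norm_eq]
    rw [Set.uIoc_of_le zero_le_one] at hρ
    exact Real.sqrt_le_sqrt (hB ρ (Set.Ioc_subset_Icc_self hρ))
  simp only [hcoord]
  rw [← Real.sq_sqrt (Finset.sum_nonneg fun i _ => sq_nonneg _), ← EuclideanSpace.norm_eq,
    ← Real.sq_sqrt hB0]
  exact pow_le_pow_left₀ (norm_nonneg _) hnorm 2

lemma pd_flip (j : Fin n) (u : (Fin n → Bool) → ℂ) (x : Fin n → Bool) :
    pd j u (flip j x) = -pd j u x := by
  simp [pd, flip_involutive j x]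

lemma sq_gradLen (f : (Fin n → Bool) → ℂ) (x : Fin n → Bool) :
    gradLen f x ^ 2 = ∑ j, ‖pd j f x‖ ^ 2 :=
  Real.sq_sqrt (Finset.sum_nonneg fun _ _ => sq_nonneg _)

lemma gradLen_le_rLinf (f : (Fin n → Bool) → ℂ) (x : Fin n → Bool) :
    gradLen f x ≤ rLinf (gradLen f) :=
  (le_abs_self _).trans (le_ciSup (f := fun y => |gradLen f y|) (Set.finite_range _).bddAbove x)

lemma expect_noiseKernel_update_mul_pd (f : (Fin n → Bool) → ℂ) (j : Fin n) (ρ : ℝ)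
    (x : Fin n → Bool) :
    𝔼 y, (noiseKernel (Function.update (fun _ => ρ) j 1) x y : ℂ) * pd j f y =
      ∑ S, walshCoeff (pd j f) S * ((ρ ^ (S.card - 1) : ℝ) : ℂ) * walsh S x := by
  conv_lhs => enter [2, y]; rw [← sum_walshCoeff_mul_walsh (pd j f) y]
  simp only [Finset.mul_sum, Finset.expect_sum_comm, mul_left_comm _ (walshCoeff _ _),
    ← Finset.mul_expect, expect_noiseKernel_mul_walsh]
  refine Finset.sum_congr rfl fun S _ => ?_
  rw [walshCoeff_pd]
  split_ifs with hj
  · have hrest : ∏ k ∈ S.erase j, ((Function.update (fun _ => ρ) j 1 k : ℝ) : ℂ) =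
        (ρ : ℂ) ^ (S.card - 1) := by
      rw [Finset.prod_congr rfl fun k hk => by
          rw [Function.update_of_ne (Finset.ne_of_mem_erase hk)],
        Finset.prod_const, Finset.card_erase_of_mem hj]
    rw [← Finset.mul_prod_erase _ _ hj, hrest, Function.update_self]
    push_cast
    ring
  · simp

-- `1 / #S = ∫₀¹ ρ ^ (#S - 1) dρ`, the eigenvalue of `w_S` under the kernel below when `j ∈ S`.
lemma pd_lapInv_eq_integral (f : (Fin n → Bool) → ℂ) (j : Fin n) (x : Fin n → Bool) :
    pd j (lapInv f) x = ∫ ρ in (0 : ℝ)..1,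
      𝔼 y, (noiseKernel (Function.update (fun _ => ρ) j 1) x y : ℂ) * pd j f y := by
  simp only [expect_noiseKernel_update_mul_pd]
  rw [intervalIntegral.integral_finsetSum fun S _ =>
      (by fun_prop : Continuous _).intervalIntegrable 0 1,
    ← sum_walshCoeff_mul_walsh (pd j (lapInv f)) x]
  refine Finset.sum_congr rfl fun S _ => ?_
  rw [intervalIntegral.integral_mul_const, intervalIntegral.integral_const_mul,
    intervalIntegral.integral_ofReal, integral_pow, walshCoeff_pd, walshCoeff_pd, walshCoeff_lapInv]
  split_ifs with hj
  · have hcard : 1 ≤ S.card := Finset.card_pos.mpr ⟨j, hj⟩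
    rw [Nat.cast_sub hcard]
    push_cast
    ring
  · simp

lemma sum_norm_expect_noiseKernel_mul_pd_sq_le (f : (Fin n → Bool) → ℂ) {ρ : ℝ}
    (hρ : ρ ∈ Set.Icc (0 : ℝ) 1) (x : Fin n → Bool) :
    ∑ j, ‖𝔼 y, (noiseKernel (Function.update (fun _ => ρ) j 1) x y : ℂ) * pd j f y‖ ^ 2 ≤
      rLinf (gradLen f) ^ 2 := by
  have hρ' : |ρ| ≤ 1 := abs_le.mpr ⟨by linarith [hρ.1], hρ.2⟩
  have hr : ∀ j k : Fin n, |Function.update (fun _ => ρ) j 1 k| ≤ 1 := fun j k => by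
    rcases eq_or_ne k j with rfl | h
    · simp
    · simpa [Function.update_of_ne h]
  calc ∑ j, ‖𝔼 y, (noiseKernel (Function.update (fun _ => ρ) j 1) x y : ℂ) * pd j f y‖ ^ 2
      ≤ ∑ j, 𝔼 y, noiseKernel (Function.update (fun _ => ρ) j 1) x y * ‖pd j f y‖ ^ 2 :=
        Finset.sum_le_sum fun j _ => norm_expect_noiseKernel_mul_sq_le (hr j) _ x
    _ = ∑ j, 𝔼 y, noiseKernel (fun _ => ρ) x y * ‖pd j f y‖ ^ 2 :=
        Finset.sum_congr rfl fun j _ => expect_noiseKernel_mul_eq_of_comp_flip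
          (fun k hk => Function.update_of_ne hk _ _) (fun y => by rw [pd_flip, norm_neg]) x
    _ = 𝔼 y, noiseKernel (fun _ => ρ) x y * gradLen f y ^ 2 := by
        simp only [sq_gradLen, Finset.mul_sum, Finset.expect_sum_comm]
    _ ≤ 𝔼 y, noiseKernel (fun _ => ρ) x y * rLinf (gradLen f) ^ 2 :=
        Finset.expect_le_expect fun y _ => mul_le_mul_of_nonneg_left
          (pow_le_pow_left₀ (Real.sqrt_nonneg _) (gradLen_le_rLinf f y) 2)
          (noiseKernel_nonneg (fun _ => hρ') x y)
    _ = rLinf (gradLen f) ^ 2 := by rw [← Finset.expect_mul, expect_noiseKernel, one_mul]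

lemma sum_norm_pd_lapInv_sq_le (f : (Fin n → Bool) → ℂ) (x : Fin n → Bool) :
    ∑ j, ‖pd j (lapInv f) x‖ ^ 2 ≤ rLinf (gradLen f) ^ 2 := by
  simp only [pd_lapInv_eq_integral]
  exact sum_norm_intervalIntegral_sq_le
    (fun j => by simp only [expect_noiseKernel_update_mul_pd]; fun_prop)
    fun ρ hρ => sum_norm_expect_noiseKernel_mul_pd_sq_le f hρ x

lemma norm_mul_norm_pow_sub_le (z w : ℂ) (m : ℕ) :
    ‖z * (‖z‖ ^ m : ℝ) - w * (‖w‖ ^ m : ℝ)‖ ≤ (m + 1) * (‖z‖ ^ m + ‖w‖ ^ m) * ‖z - w‖ := by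
  set M := max ‖z‖ ‖w‖ with hMdef
  have hM : M ^ m ≤ ‖z‖ ^ m + ‖w‖ ^ m := by
    rcases max_choice ‖z‖ ‖w‖ with h | h <;> rw [hMdef, h] <;>
      linarith [pow_nonneg (norm_nonneg z) m, pow_nonneg (norm_nonneg w) m]
  have hpow : ‖w‖ * |‖z‖ ^ m - ‖w‖ ^ m| ≤ m * M ^ m * ‖z - w‖ := by
    have h := abs_pow_sub_pow_le ‖z‖ ‖w‖ m
    rw [abs_norm, abs_norm] at h
    rcases m with _ | m
    · simp
    calc ‖w‖ * |‖z‖ ^ (m + 1) - ‖w‖ ^ (m + 1)| ≤ M * (|‖z‖ - ‖w‖| * (m + 1 : ℕ) * M ^ m) :=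
          mul_le_mul (le_max_right _ _) h (abs_nonneg _) (by positivity)
      _ ≤ M * (‖z - w‖ * (m + 1 : ℕ) * M ^ m) := by gcongr; exact abs_norm_sub_norm_le z w
      _ = (m + 1 : ℕ) * M ^ (m + 1) * ‖z - w‖ := by ring
  have hsplit : z * (‖z‖ ^ m : ℝ) - w * (‖w‖ ^ m : ℝ) =
      (z - w) * (‖z‖ ^ m : ℝ) + w * ((‖z‖ ^ m - ‖w‖ ^ m : ℝ) : ℂ) := by push_cast; ring
  rw [hsplit]
  refine (norm_add_le _ _).trans ?_
  simp only [norm_mul, Complex.norm_real, Real.norm_eq_abs, abs_pow, abs_norm]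
  nlinarith [norm_nonneg (z - w), pow_le_pow_left₀ (norm_nonneg z) (le_max_left ‖z‖ ‖w‖) m,
    pow_nonneg (norm_nonneg w) m, mul_le_mul_of_nonneg_right hM (norm_nonneg (z - w))]

lemma sum_norm_pd_lapInv_mul_norm_pd_le (f : (Fin n → Bool) → ℂ) (x : Fin n → Bool) :
    ∑ j, ‖pd j (lapInv f) x‖ * ‖pd j f x‖ ≤ rLinf (gradLen f) ^ 2 := by
  have hgrad : ∑ j, ‖pd j f x‖ ^ 2 ≤ rLinf (gradLen f) ^ 2 := by
    rw [← sq_gradLen]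
    exact pow_le_pow_left₀ (Real.sqrt_nonneg _) (gradLen_le_rLinf f x) 2
  have hCS := Finset.sum_mul_sq_le_sq_mul_sq Finset.univ (fun j => ‖pd j (lapInv f) x‖)
    fun j => ‖pd j f x‖
  refine (pow_le_pow_iff_left₀ (Finset.sum_nonneg fun _ _ => by positivity) (sq_nonneg _)
    two_ne_zero).mp ?_
  calc (∑ j, ‖pd j (lapInv f) x‖ * ‖pd j f x‖) ^ 2
      ≤ (∑ j, ‖pd j (lapInv f) x‖ ^ 2) * ∑ j, ‖pd j f x‖ ^ 2 := hCS
    _ ≤ rLinf (gradLen f) ^ 2 * rLinf (gradLen f) ^ 2 :=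
        mul_le_mul (sum_norm_pd_lapInv_sq_le f x) hgrad (Finset.sum_nonneg fun _ _ => by positivity)
          (sq_nonneg _)
    _ = (rLinf (gradLen f) ^ 2) ^ 2 := by ring

lemma four_mul_expect_norm_pow_le (f : (Fin n → Bool) → ℂ) (q : ℕ) :
    4 * 𝔼 x, ‖f x - expect f‖ ^ (2 * q + 2) ≤ ∑ j, 𝔼 x, ‖pd j (lapInv f) x‖ *
      ‖pd j (fun y => (f y - expect f) * (‖f y - expect f‖ ^ (2 * q) : ℝ)) x‖ := by
  have hpair : ∀ z : ℂ, z * conj (z * (‖z‖ ^ (2 * q) : ℝ)) = ((‖z‖ ^ (2 * q + 2) : ℝ) : ℂ) := by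
    intro z
    rw [map_mul, Complex.conj_ofReal, ← mul_assoc, Complex.mul_conj, Complex.normSq_eq_norm_sq]
    push_cast
    ring
  have hIBP := four_mul_expect_sub_mul_conj f
    fun y => (f y - expect f) * (‖f y - expect f‖ ^ (2 * q) : ℝ)
  simp only [hpair] at hIBP
  calc 4 * 𝔼 x, ‖f x - expect f‖ ^ (2 * q + 2)
      = ‖4 * 𝔼 x, ((‖f x - expect f‖ ^ (2 * q + 2) : ℝ) : ℂ)‖ := by
        rw [← Complex.ofReal_expect, ← Complex.ofReal_ofNat, ← Complex.ofReal_mul,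
          Complex.norm_real, Real.norm_of_nonneg (by positivity)]
    _ ≤ _ := by
        rw [hIBP]
        refine (norm_sum_le _ _).trans (Finset.sum_le_sum fun j _ => ?_)
        refine (RCLike.norm_expect_le (K := ℝ)).trans_eq ?_
        simp only [norm_mul, Complex.norm_conj]

lemma norm_pd_mul_norm_pow_le (f : (Fin n → Bool) → ℂ) (q : ℕ) (j : Fin n) (x : Fin n → Bool) :
    ‖pd j (fun y => (f y - expect f) * (‖f y - expect f‖ ^ (2 * q) : ℝ)) x‖ ≤
      (2 * q + 1) * (‖f x - expect f‖ ^ (2 * q) + ‖f (flip j x) - expect f‖ ^ (2 * q)) *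
        ‖pd j f x‖ := by
  have h := norm_mul_norm_pow_sub_le (f x - expect f) (f (flip j x) - expect f) (2 * q)
  rw [sub_sub_sub_cancel_right] at h
  simpa [pd] using h

lemma expect_norm_pow_succ_le (f : (Fin n → Bool) → ℂ) (q : ℕ) :
    𝔼 x, ‖f x - expect f‖ ^ (2 * q + 2) ≤
      2 * (2 * q + 1) * (rLinf (gradLen f) ^ 2 / 4) * 𝔼 x, ‖f x - expect f‖ ^ (2 * q) := by
  set a : (Fin n → Bool) → ℝ := fun x => ‖f x - expect f‖ ^ (2 * q)
  set b : Fin n → (Fin n → Bool) → ℝ := fun j x => ‖pd j (lapInv f) x‖ * ‖pd j f x‖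
  have hb : ∀ j x, b j (flip j x) = b j x := fun j x => by simp only [b, pd_flip, norm_neg]
  have h4 : 4 * 𝔼 x, ‖f x - expect f‖ ^ (2 * q + 2) ≤
      2 * (2 * q + 1) * rLinf (gradLen f) ^ 2 * 𝔼 x, a x := calc
    _ ≤ ∑ j, 𝔼 x, ‖pd j (lapInv f) x‖ *
          ((2 * q + 1) * (a x + a (flip j x)) * ‖pd j f x‖) := by
        refine (four_mul_expect_norm_pow_le f q).trans (Finset.sum_le_sum fun j _ => ?_)
        exact Finset.expect_le_expect fun x _ => mul_le_mul_of_nonneg_left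
          (norm_pd_mul_norm_pow_le f q j x) (norm_nonneg _)
    _ = ∑ j, (2 * q + 1) * 𝔼 x, b j x * (a x + a (flip j x)) := by
        simp only [b, Finset.mul_expect]
        congr! 2 with j _ x
        ring
    _ = 2 * (2 * q + 1) * 𝔼 x, (∑ j, b j x) * a x := by
        simp only [expect_mul_add_comp_flip (hb _), Finset.sum_mul, Finset.expect_sum_comm,
          Finset.mul_sum]
        congr! 1 with j
        ring
    _ ≤ 2 * (2 * q + 1) * 𝔼 x, rLinf (gradLen f) ^ 2 * a x := by
        gcongr with x
        exact sum_norm_pd_lapInv_mul_norm_pd_le f x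
    _ = 2 * (2 * q + 1) * rLinf (gradLen f) ^ 2 * 𝔼 x, a x := by
        rw [← Finset.mul_expect]
        ring
  linarith

lemma expect_norm_pow_le (f : (Fin n → Bool) → ℂ) (k : ℕ) :
    𝔼 x, ‖f x - expect f‖ ^ (2 * k) ≤ (2 * k)! / k ! * (rLinf (gradLen f) ^ 2 / 4) ^ k := by
  induction k with
  | zero => simp
  | succ k ih =>
    have hfac : ((2 * (k + 1))! / (k + 1)! : ℝ) = 2 * (2 * k + 1) * ((2 * k)! / k !) := by
      rw [show 2 * (k + 1) = 2 * k + 1 + 1 by ring, Nat.factorial_succ, Nat.factorial_succ,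
        Nat.factorial_succ]
      push_cast
      field_simp
      ring
    calc 𝔼 x, ‖f x - expect f‖ ^ (2 * (k + 1))
        ≤ 2 * (2 * k + 1) * (rLinf (gradLen f) ^ 2 / 4) * 𝔼 x, ‖f x - expect f‖ ^ (2 * k) :=
          expect_norm_pow_succ_le f k
      _ ≤ 2 * (2 * k + 1) * (rLinf (gradLen f) ^ 2 / 4) *
            ((2 * k)! / k ! * (rLinf (gradLen f) ^ 2 / 4) ^ k) := by gcongr
      _ = _ := by rw [hfac]; ring

lemma expect_cosh_mul_norm_le (f : (Fin n → Bool) → ℂ) (s : ℝ) :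
    𝔼 x, cosh (s * ‖f x - expect f‖) ≤ exp (s ^ 2 * (rLinf (gradLen f) ^ 2 / 4)) := by
  set B := rLinf (gradLen f) ^ 2 / 4
  have hcosh : HasSum (fun k => 𝔼 x, (s * ‖f x - expect f‖) ^ (2 * k) / (2 * k)!)
      (𝔼 x, cosh (s * ‖f x - expect f‖)) := by
    simp only [expect_eq_sum_div]
    exact (hasSum_sum fun x _ => Real.hasSum_cosh _).div_const _
  have hexp : HasSum (fun k => (s ^ 2 * B) ^ k / k !) (exp (s ^ 2 * B)) := by
    rw [Real.exp_eq_exp_ℝ]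
    exact NormedSpace.expSeries_div_hasSum_exp _
  refine hasSum_le (fun k => ?_) hcosh hexp
  calc 𝔼 x, (s * ‖f x - expect f‖) ^ (2 * k) / (2 * k)!
      = s ^ (2 * k) / (2 * k)! * 𝔼 x, ‖f x - expect f‖ ^ (2 * k) := by
        simp only [mul_pow, Finset.mul_expect]
        congr! 1 with x
        ring
    _ ≤ s ^ (2 * k) / (2 * k)! * ((2 * k)! / k ! * B ^ k) :=
        mul_le_mul_of_nonneg_left (expect_norm_pow_le f k) (by rw [pow_mul]; positivity)
    _ = (s ^ 2 * B) ^ k / k ! := by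
        rw [pow_mul]
        field_simp
        ring

lemma card_filter_lt_div_le (f : (Fin n → Bool) → ℂ) {t : ℝ} (ht : 0 ≤ t) :
    ((Finset.univ.filter fun x : Fin n → Bool => t < ‖f x - expect f‖).card : ℝ) / 2 ^ n ≤
      2 * exp (-t ^ 2 / rLinf (gradLen f) ^ 2) := by
  set L := rLinf (gradLen f)
  set A := Finset.univ.filter fun x : Fin n → Bool => t < ‖f x - expect f‖
  rcases eq_or_ne L 0 with hL | hL
  · -- the right-hand side is `2 * exp (-t ^ 2 / 0) = 2`
    have hA : (A.card : ℝ) ≤ 2 ^ n := by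
      exact_mod_cast (Finset.card_le_univ A).trans_eq card_cube
    rw [hL, div_le_iff₀ (by positivity)]
    simp only [ne_eq, OfNat.ofNat_ne_zero, not_false_eq_true, zero_pow, div_zero, exp_zero]
    linarith [pow_pos (two_pos : (0 : ℝ) < 2) n]
  set s := 2 * t / L ^ 2
  have hs : 0 ≤ s := by positivity
  have hmarkov : (A.card : ℝ) / 2 ^ n * cosh (s * t) ≤ 𝔼 x, cosh (s * ‖f x - expect f‖) := by
    rw [expect_eq_sum_div, div_mul_eq_mul_div, div_le_div_iff_of_pos_right (by positivity),
      ← nsmul_eq_mul]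
    calc A.card • cosh (s * t) ≤ ∑ x ∈ A, cosh (s * ‖f x - expect f‖) :=
          Finset.card_nsmul_le_sum _ _ _ fun x hx => by
            rw [Real.cosh_le_cosh, abs_of_nonneg (by positivity), abs_of_nonneg (by positivity)]
            exact mul_le_mul_of_nonneg_left (Finset.mem_filter.mp hx).2.le hs
      _ ≤ ∑ x, cosh (s * ‖f x - expect f‖) :=
          Finset.sum_le_sum_of_subset_of_nonneg (Finset.subset_univ _) fun _ _ _ => (cosh_pos _).le
  have hcosh : exp (s * t) / 2 ≤ cosh (s * t) := by
    rw [cosh_eq]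
    linarith [exp_pos (-(s * t))]
  have hexponent : s ^ 2 * (L ^ 2 / 4) - s * t = -t ^ 2 / L ^ 2 := by
    simp only [s]
    field_simp
    ring
  have hbound := hmarkov.trans (expect_cosh_mul_norm_le f s)
  rw [← hexponent, exp_sub, mul_div_assoc', le_div_iff₀ (exp_pos _)]
  nlinarith [mul_le_mul_of_nonneg_left hcosh (by positivity : (0 : ℝ) ≤ A.card / 2 ^ n)]

end DiscreteCube

theorem cube_concentration_general (n : ℕ) (f : (Fin n → Bool) → ℂ) (t : ℝ) (ht : 0 < t) :
    ((Finset.univ.filter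
        (fun x : Fin n → Bool => t < ‖f x - expect f‖)).card : ℝ) / 2 ^ n ≤
      2 * Real.exp (-(8 * t ^ 2) / (π ^ 2 * rLinf (gradLen f) ^ 2)) := by
  refine (card_filter_lt_div_le f ht.le).trans ?_
  have hπ : 8 / π ^ 2 ≤ 1 := div_le_one_of_le₀ (by nlinarith [pi_gt_three]) (sq_nonneg π)
  refine mul_le_mul_of_nonneg_left (exp_le_exp.mpr ?_) zero_le_two
  rw [neg_div, neg_div, neg_le_neg_iff, ← div_mul_div_comm]
  exact mul_le_of_le_one_left (by positivity) hπ

/-- **Concentration on the discrete cube.** For every `n ≥ 1`, every nonconstant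
`f : Ω_n → ℂ` and every `t > 0`,
`ℙ{|f − 𝔼f| > t} ≤ 2 exp(−8t²/(π²‖|∇f|‖_∞²))`. -/
theorem cube_concentration (n : ℕ) (hn : 1 ≤ n) (f : (Fin n → Bool) → ℂ)
    (hf : ∃ x y, f x ≠ f y) (t : ℝ) (ht : 0 < t) :
    ((Finset.univ.filter
        (fun x : Fin n → Bool => t < ‖f x - expect f‖)).card : ℝ) / 2 ^ n ≤
      2 * Real.exp (-(8 * t ^ 2) / (π ^ 2 * rLinf (gradLen f) ^ 2)) :=
  cube_concentration_general n f t ht
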